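/- Let U₁,…,U₈ be words over an alphabet with involutive reversal satisfying the non-interleaved double-chain equations U₁ = U₅⁻¹, U₃ = U₇⁻¹, U₂U₃U₄ = U₈⁻¹U₇⁻¹U₆⁻¹, and U₄U₅U₆ = U₂⁻¹U₁⁻¹U₈⁻¹, and suppose |U₂| > |U₄|. Then there exist nonempty words X, Y such that U₂ = U₈⁻¹X, U₆ = U₄⁻¹Y, X and Y⁻¹ are anagrams of each other (hence XY is balanced), and Y⁻¹X⁻¹ occurs as a subword of the concatenation U₂U₃U₄U₅U₆. -/

import Mathlib

/-!
Substituting `U₁ = U₅⁻¹` and `U₃ = U₇⁻¹`, the chain equations read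
`U₂U₃U₄ = U₈⁻¹U₃U₆⁻¹` and `U₄U₅U₆ = U₂⁻¹U₅U₈⁻¹`; comparing lengths gives `|U₄| = |U₈|`.
So `U₈⁻¹` is a proper prefix of `U₂` and `U₄` a proper suffix of `U₆⁻¹`; writing `U₂ = U₈⁻¹X`
and `U₆⁻¹ = WU₄` leaves the conjugacy `XU₃ = U₃W`, which makes `X` and `W = Y⁻¹` anagrams.
Finally `U₂U₃U₄U₅U₆ = U₈⁻¹U₃W X⁻¹U₈U₅U₈⁻¹` exhibits `WX⁻¹ = Y⁻¹X⁻¹` as a factor.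
-/

/-- Letterwise reversal of a word over an alphabet with reversal `inv`. -/
def wrev {A : Type*} (inv : A → A) (W : List A) : List A := (W.map inv).reverse

section Wrev

variable {A : Type*} (inv : A → A)

@[simp]
theorem wrev_append (a b : List A) : wrev inv (a ++ b) = wrev inv b ++ wrev inv a := by
  simp [wrev]

@[simp]
theorem length_wrev (a : List A) : (wrev inv a).length = a.length := by
  simp [wrev]

theorem wrev_wrev {inv : A → A} (hinv : Function.Involutive inv) (a : List A) :
    wrev inv (wrev inv a) = a := by
  simp [wrev, List.map_reverse, hinv.comp_self]

theorem List.Perm.wrev {a b : List A} (h : a.Perm b) : (wrev inv a).Perm (wrev inv b) :=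
  (List.reverse_perm _).trans ((h.map inv).trans (List.reverse_perm _).symm)

end Wrev

theorem List.perm_of_append_eq_append_comm {α : Type*} {x w c : List α} (h : x ++ c = c ++ w) :
    x.Perm w :=
  (List.perm_append_right_iff c).mp (h ▸ List.perm_append_comm)

theorem List.exists_conj_of_append_append_eq {α : Type*} {a c d p q : List α}
    (h : a ++ c ++ d = p ++ c ++ q) (hlen : p.length ≤ a.length) :
    ∃ x w, a = p ++ x ∧ q = w ++ d ∧ x ++ c = c ++ w := by
  have hq : d.length ≤ q.length := by
    have := congrArg List.length h
    simp only [List.length_append] at this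
    omega
  obtain ⟨x, rfl⟩ : p <+: a :=
    List.prefix_of_prefix_length_le (h ▸ (List.prefix_append _ c).trans (List.prefix_append _ q))
      ((List.prefix_append _ c).trans (List.prefix_append _ d)) hlen
  obtain ⟨w, rfl⟩ : d <:+ q :=
    List.suffix_of_suffix_length_le (h ▸ List.suffix_append _ d) (List.suffix_append _ q) hq
  refine ⟨x, w, rfl, rfl, ?_⟩
  simp only [List.append_assoc] at h
  exact List.append_cancel_right (by simpa only [List.append_assoc] using List.append_cancel_left h)

theorem stmt6 {A : Type*} (inv : A → A) (hinv : Function.Involutive inv)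
    (U1 U2 U3 U4 U5 U6 U7 U8 : List A)
    (h1 : U1 = wrev inv U5) (h3 : U3 = wrev inv U7)
    (h24 : U2 ++ U3 ++ U4 = wrev inv (U6 ++ U7 ++ U8))
    (h46 : U4 ++ U5 ++ U6 = wrev inv (U8 ++ U1 ++ U2))
    (hlen : U4.length < U2.length) :
    ∃ X Y : List A, X ≠ [] ∧ Y ≠ [] ∧
      U2 = wrev inv U8 ++ X ∧ U6 = wrev inv U4 ++ Y ∧
      X.Perm (wrev inv Y) ∧
      (X ++ Y).Perm (wrev inv (X ++ Y)) ∧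
      (wrev inv Y ++ wrev inv X) <:+: (U2 ++ U3 ++ U4 ++ U5 ++ U6) := by
  simp only [wrev_append, ← h3, h1, wrev_wrev hinv, ← List.append_assoc] at h24 h46
  have hU48 : U8.length = U4.length := by
    have hl24 := congrArg List.length h24
    have hl46 := congrArg List.length h46
    simp only [List.length_append, length_wrev] at hl24 hl46
    omega
  obtain ⟨X, W, rfl, hU6, hconj⟩ :=
    List.exists_conj_of_append_append_eq h24 (by rw [length_wrev]; omega)
  have hXW := List.perm_of_append_eq_append_comm hconj
  have hX : X ≠ [] := by
    rintro rfl
    simp only [List.append_nil, length_wrev] at hlen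
    omega
  refine ⟨X, wrev inv W, hX, ?_, rfl, ?_, by rwa [wrev_wrev hinv], ?_, ?_⟩
  · rwa [← List.length_pos_iff, length_wrev, ← hXW.length_eq, List.length_pos_iff]
  · rw [← wrev_wrev hinv U6, hU6, wrev_append]
  · rw [wrev_append, wrev_wrev hinv]
    exact hXW.append (hXW.wrev inv).symm
  · rw [wrev_wrev hinv]
    refine ⟨wrev inv U8 ++ U3, U8 ++ U5 ++ wrev inv U8, ?_⟩
    simp only [wrev_append, wrev_wrev hinv, List.append_assoc] at h46 ⊢
    rw [h46, ← List.append_assoc X, hconj, List.append_assoc]
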